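/- Let V be a D(ℝ)-submodule of D(ℝ)^(n) and let S be a finite subset of V that tropically spans V. Then S has at least rank(V) elements. -/

import Mathlib

noncomputable section

/-- The extended tropical semifield `D(ℝ)`: `bot` is `-∞`; `nb g r` is the element of
underlying value `r : ℝ`, ghost if `g = true`, tangible if `g = false`. -/
inductive DR : Type where
  | bot : DR
  | nb : Bool → ℝ → DR

namespace DR

/-- Supertropical addition on `D(ℝ)`. -/
def add : DR → DR → DR
  | bot, y => y
  | x, bot => x
  | nb b r, nb c s => if r < s then nb c s else if s < r then nb b r else nb true r

/-- Supertropical multiplication on `D(ℝ)`. -/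
def mul : DR → DR → DR
  | bot, _ => bot
  | _, bot => bot
  | nb b r, nb c s => nb (b || c) (r + s)

theorem bot_add (x : DR) : add bot x = x := by cases x <;> rfl

theorem add_bot (x : DR) : add x bot = x := by cases x <;> rfl

theorem bot_mul (x : DR) : mul bot x = bot := by cases x <;> rfl

theorem mul_bot (x : DR) : mul x bot = bot := by cases x <;> rfl

theorem add_comm' (x y : DR) : add x y = add y x := by
  cases x <;> cases y <;> (try rfl)
  simp only [add]
  split_ifs <;>
    first
      | rfl
      | (exfalso; linarith)
      | (congr 1 <;> first | rfl | linarith)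

theorem add_assoc' (x y z : DR) : add (add x y) z = add x (add y z) := by
  cases x with
  | bot => rw [bot_add, bot_add]
  | nb b r =>
    cases y with
    | bot => rw [add_bot, bot_add]
    | nb c s =>
      cases z with
      | bot => rw [add_bot, add_bot]
      | nb d t =>
        simp only [add]
        split_ifs <;>
          simp only [add] <;>
          (try split_ifs) <;>
          first
            | rfl
            | (exfalso; linarith)
            | (congr 1 <;> first | rfl | linarith)

theorem mul_comm' (x y : DR) : mul x y = mul y x := by
  cases x <;> cases y <;> (try rfl)
  simp [mul, Bool.or_comm, add_comm]

theorem mul_assoc' (x y z : DR) : mul (mul x y) z = mul x (mul y z) := by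
  cases x <;> cases y <;> cases z <;> (try rfl) <;>
    simp [mul, Bool.or_assoc, add_assoc]

theorem one_mul' (x : DR) : mul (nb false 0) x = x := by
  cases x <;> simp [mul]

theorem left_distrib' (x y z : DR) : mul x (add y z) = add (mul x y) (mul x z) := by
  cases x with
  | bot => simp [bot_mul, bot_add]
  | nb b r =>
    cases y with
    | bot => simp [bot_add, mul_bot]
    | nb c s =>
      cases z with
      | bot => simp [add_bot, mul_bot]
      | nb d t =>
        simp only [mul, add]
        split_ifs <;>
          simp only [mul, add, Bool.or_true, Bool.true_or] <;>
          (try split_ifs) <;>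
          first
            | rfl
            | (exfalso; linarith)
            | (congr 1 <;> first | rfl | linarith)

theorem right_distrib' (x y z : DR) : mul (add x y) z = add (mul x z) (mul y z) := by
  rw [mul_comm' (add x y) z, left_distrib', mul_comm' z x, mul_comm' z y]

instance : Add DR := ⟨add⟩
instance : Zero DR := ⟨bot⟩
instance : Mul DR := ⟨mul⟩
instance : One DR := ⟨nb false 0⟩

instance : AddCommMonoid DR where
  add := add
  add_assoc := add_assoc'
  zero := bot
  zero_add := bot_add
  add_zero := add_bot
  add_comm := add_comm'
  nsmul := nsmulRec

instance : CommMonoid DR where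
  mul := mul
  mul_assoc := mul_assoc'
  one := nb false 0
  one_mul := one_mul'
  mul_one := fun x => by show mul x (nb false 0) = x; rw [mul_comm']; exact one_mul' x
  mul_comm := mul_comm'
  npow := npowRec

instance : CommSemiring DR where
  __ := (inferInstance : AddCommMonoid DR)
  __ := (inferInstance : CommMonoid DR)
  left_distrib := left_distrib'
  right_distrib := right_distrib'
  zero_mul := bot_mul
  mul_zero := mul_bot

/-- The ghost ideal `G₀ = ℝ^ν ∪ {-∞}` as a predicate. -/
def IsGhost : DR → Prop
  | bot => True
  | nb b _ => b = true

/-- The tangible elements `T = ℝ` as a predicate. -/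
def Tangible : DR → Prop
  | nb false _ => True
  | _ => False

/-- Membership in `T ∪ {-∞}`. -/
def TangibleOrBot (x : DR) : Prop := x = bot ∨ Tangible x

/-- The underlying value in `ℝ ∪ {-∞}`. -/
def val : DR → WithBot ℝ
  | bot => ⊥
  | nb _ r => (r : WithBot ℝ)

/-- `x ≤_ν y` : comparison of underlying values, `-∞` smallest. -/
def nuLe (x y : DR) : Prop := val x ≤ val y

/-- `x <_ν y` : strict comparison of underlying values, `-∞` smallest. -/
def nuLt (x y : DR) : Prop := val x < val y

/-- The tangible lift `x̂` of `x` (with `hat bot = bot`). -/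
def hat : DR → DR
  | bot => bot
  | nb _ r => nb false r

/-- The ghost map `ν`. -/
def nu : DR → DR
  | bot => bot
  | nb _ r => nb true r

/-- The ghost-surpass relation `x ⊨ y` on `D(ℝ)`. -/
def GhostSurp (x y : DR) : Prop := ∃ c : DR, IsGhost c ∧ x = y + c

end DR

open DR

/-- A vector in `D(ℝ)^(n)` lies in the ghost submodule `G₀^(n)`. -/
def GhostVec {n : ℕ} (v : Fin n → DR) : Prop := ∀ j, IsGhost (v j)

/-- A tangible vector: all entries in `T ∪ {-∞}`. -/
def TangibleVec {n : ℕ} (v : Fin n → DR) : Prop := ∀ j, TangibleOrBot (v j)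

/-- The ghost-surpass relation `v ⊨ w` on vectors. -/
def GhostSurpVec {n : ℕ} (v w : Fin n → DR) : Prop :=
  ∃ u : Fin n → DR, GhostVec u ∧ v = w + u

/-- A family of vectors is tropically dependent. -/
def TropDep {ι : Type*} [Fintype ι] {n : ℕ} (w : ι → Fin n → DR) : Prop :=
  ∃ I : Finset ι, I.Nonempty ∧ ∃ α : ι → DR, (∀ i ∈ I, Tangible (α i)) ∧
    ∀ j : Fin n, IsGhost (∑ i ∈ I, α i * w i j)

/-- A family of vectors is tropically independent. -/
def TropIndep {ι : Type*} [Fintype ι] {n : ℕ} (w : ι → Fin n → DR) : Prop := ¬ TropDep w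

/-- A set of vectors is tropically dependent. -/
def SetTropDep {n : ℕ} (S : Set (Fin n → DR)) : Prop :=
  ∃ I : Finset (Fin n → DR), ↑I ⊆ S ∧ I.Nonempty ∧
    ∃ α : (Fin n → DR) → DR, (∀ w ∈ I, Tangible (α w)) ∧
      ∀ j : Fin n, IsGhost (∑ w ∈ I, α w * w j)

/-- A set of vectors is tropically independent. -/
def SetTropIndep {n : ℕ} (S : Set (Fin n → DR)) : Prop := ¬ SetTropDep S

/-- A d-base of `V`: a maximal tropically independent subset of `V`. -/
def IsDBase {n : ℕ} (V S : Set (Fin n → DR)) : Prop :=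
  S ⊆ V ∧ SetTropIndep S ∧ ∀ S', S ⊆ S' → S' ⊆ V → SetTropIndep S' → S' = S

/-- The rank of `V`: the maximal number of elements of a d-base of `V`. -/
noncomputable def trank {n : ℕ} (V : Set (Fin n → DR)) : ℕ :=
  sSup {m | ∃ S, IsDBase V S ∧ S.Finite ∧ S.ncard = m}

/-- `v` is tropically spanned by `S`. -/
def SpannedBy {n : ℕ} (S : Set (Fin n → DR)) (v : Fin n → DR) : Prop :=
  ∃ I : Finset (Fin n → DR), ↑I ⊆ S ∧ I.Nonempty ∧
    ∃ α : (Fin n → DR) → DR, (∀ w ∈ I, Tangible (α w)) ∧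
      GhostSurpVec v (fun j => ∑ w ∈ I, α w * w j)

/-- The tropical determinant (permanent) of a square matrix over `D(ℝ)`. -/
noncomputable def tperm {k : ℕ} (A : Matrix (Fin k) (Fin k) DR) : DR :=
  ∑ π : Equiv.Perm (Fin k), ∏ i, A (π i) i

/-!
Write each element `t` of a tropically independent `T ⊆ V` as `t ⊨ ∑_{w ∈ S} c_t(w) w`. The
coefficient vectors `c_t` lie in `D(ℝ)^(#S)`, so if `#T > #S` they are tropically dependent:
tangible `β_t` make every `∑_t β_t c_t(w)` ghost, and then `∑_t β_t t` is ghost, so `T` is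
dependent.

That more than `m` vectors of `D(ℝ)^(m)` are dependent only involves their values in `ℝ ∪ {-∞}`.
If some row can be deleted so that the columns still match into the remaining rows along finite
entries, the max-plus permanents of the matrices with one row deleted are the coefficients
(tropical Cramer's rule). Otherwise Hall's theorem yields a set `C` of columns that are `-∞`
outside fewer than `#C` rows, and one recurses after deleting `C` and those rows.
-/

section MaxPlus

open Finset

variable {ι κ : Type*}

/-- The maximum of `y` over `I` is `⊥` or attained twice: a supertropical sum with these values
is ghost. -/
def MaxAttainedTwice (I : Finset ι) (y : ι → WithBot ℝ) : Prop :=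
  ∀ i ∈ I, y i ≠ ⊥ → ∃ i' ∈ I, i' ≠ i ∧ y i ≤ y i'

def IsMinorMatching (K : Finset κ) (R : Finset ι) (i : ι) (σ : κ → ι) : Prop :=
  (∀ k ∈ K, σ k ∈ R ∧ σ k ≠ i) ∧ Set.InjOn σ K

theorem IsMinorMatching.update [DecidableEq κ] {K : Finset κ} {R : Finset ι} {i : ι}
    {σ : κ → ι} {j : κ} (hσ : IsMinorMatching K R i σ) (hj : j ∈ K) (hi : i ∈ R) :
    IsMinorMatching K R (σ j) (Function.update σ j i) := by
  obtain ⟨hmaps, hinj⟩ := hσ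
  have hne : ∀ k ∈ K, k ≠ j → σ k ≠ σ j := fun k hk hkj h => hkj (hinj hk hj h)
  constructor
  · intro k hk
    by_cases hkj : k = j
    · subst hkj
      simpa using ⟨hi, (hmaps k hk).2.symm⟩
    · rw [Function.update_of_ne hkj]
      exact ⟨(hmaps k hk).1, hne k hk hkj⟩
  · intro k hk k' hk' h
    by_cases hkj : k = j <;> by_cases hk'j : k' = j <;>
      simp only [hkj, hk'j, Function.update_self, ne_eq, not_false_eq_true,
        Function.update_of_ne] at h
    · exact hkj.trans hk'j.symm
    · exact absurd h.symm (hmaps k' hk').2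
    · exact absurd h (hmaps k hk).2
    · exact hinj hk hk' h

variable [Fintype ι] [Fintype κ] (x : ι → κ → WithBot ℝ)

/-- The max-plus permanent of the (possibly non-square) minor on rows `R \ {i}`, columns `K`. -/
noncomputable def minorPerm (K : Finset κ) (R : Finset ι) (i : ι) : WithBot ℝ :=
  open Classical in
  ({σ : κ → ι | IsMinorMatching K R i σ} : Finset (κ → ι)).sup fun σ => ∑ k ∈ K, x (σ k) k

variable {x} {K : Finset κ} {R : Finset ι} {i : ι}

theorem weight_le_minorPerm {σ : κ → ι} (hσ : IsMinorMatching K R i σ) :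
    ∑ k ∈ K, x (σ k) k ≤ minorPerm x K R i := by
  classical
  exact le_sup (f := fun σ : κ → ι => ∑ k ∈ K, x (σ k) k) (mem_filter.mpr ⟨mem_univ σ, hσ⟩)

theorem exists_weight_eq_minorPerm (h : minorPerm x K R i ≠ ⊥) :
    ∃ σ, IsMinorMatching K R i σ ∧ ∑ k ∈ K, x (σ k) k = minorPerm x K R i := by
  classical
  unfold minorPerm at h ⊢
  have hne : ({σ : κ → ι | IsMinorMatching K R i σ} : Finset (κ → ι)).Nonempty :=
    nonempty_iff_ne_empty.mpr fun he => h (he ▸ sup_empty)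
  obtain ⟨σ, hσ, heq⟩ := exists_mem_eq_sup _ hne fun σ : κ → ι => ∑ k ∈ K, x (σ k) k
  exact ⟨σ, (mem_filter.mp hσ).2, heq.symm⟩

theorem maxAttainedTwice_minorPerm {j : κ} (hj : j ∈ K) :
    MaxAttainedTwice {i ∈ R | minorPerm x K R i ≠ ⊥} fun i => minorPerm x K R i + x i j := by
  classical
  intro i₁ hi₁ hne
  obtain ⟨hi₁R, hδ₁⟩ := mem_filter.mp hi₁
  obtain ⟨σ, hσ, hσw⟩ := exists_weight_eq_minorPerm hδ₁
  set rest := ∑ k ∈ K.erase j, x (σ k) k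
  have hδ₁_eq : minorPerm x K R i₁ = x (σ j) j + rest := hσw ▸ (add_sum_erase _ _ hj).symm
  -- Reassigning column `j` of an optimal matching for `i₁` to row `i₁` gives a matching for `σ j`.
  have hswap : x i₁ j + rest ≤ minorPerm x K R (σ j) := by
    refine (le_of_eq ?_).trans (weight_le_minorPerm (hσ.update hj hi₁R))
    rw [← add_sum_erase _ _ hj, Function.update_self]
    congr 1
    exact sum_congr rfl fun k hk => by rw [Function.update_of_ne (ne_of_mem_erase hk)]
  have hle : minorPerm x K R i₁ + x i₁ j ≤ minorPerm x K R (σ j) + x (σ j) j :=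
    calc minorPerm x K R i₁ + x i₁ j = (x i₁ j + rest) + x (σ j) j := by rw [hδ₁_eq]; abel
      _ ≤ _ := by gcongr
  have hδ₂ : minorPerm x K R (σ j) ≠ ⊥ := fun h => hne (le_bot_iff.mp (by simpa [h] using hle))
  exact ⟨σ j, mem_filter.mpr ⟨(hσ.1 j hj).1, hδ₂⟩, (hσ.1 j hj).2, hle⟩

theorem exists_card_biUnion_lt [DecidableEq ι] (hR : ∀ i ∈ R, minorPerm x K R i = ⊥)
    (hKR : #K < #R) : ∃ C ⊆ K, #(C.biUnion fun j => {i ∈ R | x i j ≠ ⊥}) < #C := by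
  classical
  by_contra! hHall
  obtain ⟨f, hf_inj, hf⟩ := (all_card_le_biUnion_card_iff_exists_injective
      fun j : K => {i ∈ R | x i j ≠ ⊥}).mp fun s => by
    have h := hHall (s.image Subtype.val) fun j hj => by
      obtain ⟨j', -, rfl⟩ := mem_image.mp hj
      exact j'.2
    rwa [image_biUnion, card_image_of_injective _ Subtype.val_injective] at h
  obtain ⟨i, hiR, hif⟩ : ∃ i ∈ R, i ∉ univ.image f := exists_mem_notMem_of_card_lt_card <| by
    rwa [card_image_of_injective _ hf_inj, card_univ, Fintype.card_coe]
  let σ : κ → ι := fun k => if hk : k ∈ K then f ⟨k, hk⟩ else i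
  have hσ : ∀ k (hk : k ∈ K), σ k = f ⟨k, hk⟩ := fun k hk => dif_pos hk
  have hmatch : IsMinorMatching K R i σ := by
    refine ⟨fun k hk => ⟨?_, ?_⟩, fun k hk k' hk' h => ?_⟩
    · rw [hσ k hk]
      exact (mem_filter.mp (hf ⟨k, hk⟩)).1
    · rw [hσ k hk]
      exact fun h => hif (mem_image.mpr ⟨_, mem_univ _, h⟩)
    · exact congrArg Subtype.val (hf_inj ((hσ k hk).symm.trans (h.trans (hσ k' hk'))))
  have hweight : ∑ k ∈ K, x (σ k) k ≠ ⊥ := by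
    rw [Ne, WithBot.sum_eq_bot_iff]
    rintro ⟨k, hk, hbot⟩
    rw [hσ k hk] at hbot
    exact (mem_filter.mp (hf ⟨k, hk⟩)).2 hbot
  exact hweight (le_bot_iff.mp (hR i hiR ▸ weight_le_minorPerm hmatch))

variable (x) in
theorem exists_maxAttainedTwice (K : Finset κ) (R : Finset ι) (hKR : #K < #R) :
    ∃ I ⊆ R, I.Nonempty ∧ ∃ a : ι → WithBot ℝ, (∀ i ∈ I, a i ≠ ⊥) ∧
      ∀ j ∈ K, MaxAttainedTwice I fun i => a i + x i j := by
  classical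
  induction K using Finset.strongInduction generalizing R with
  | H K ih =>
  by_cases hCramer : ∃ i ∈ R, minorPerm x K R i ≠ ⊥
  · obtain ⟨i, hiR, hi⟩ := hCramer
    exact ⟨_, filter_subset _ R, ⟨i, mem_filter.mpr ⟨hiR, hi⟩⟩, minorPerm x K R,
      fun i hi => (mem_filter.mp hi).2, fun j hj => maxAttainedTwice_minorPerm hj⟩
  push Not at hCramer
  obtain ⟨C, hCK, hC⟩ := exists_card_biUnion_lt hCramer hKR
  set N := C.biUnion fun j => {i ∈ R | x i j ≠ ⊥}
  have hNR : N ⊆ R := biUnion_subset.mpr fun j _ => filter_subset _ R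
  have hCne : C.Nonempty := card_pos.mp (by omega)
  obtain ⟨I, hIR, hIne, a, ha, hI⟩ := ih (K \ C) (sdiff_ssubset hCK hCne) (R \ N) (by
    rw [card_sdiff_of_subset hCK, card_sdiff_of_subset hNR]
    have := card_le_card hCK
    omega)
  refine ⟨I, hIR.trans sdiff_subset, hIne, a, ha, fun j hj => ?_⟩
  by_cases hjC : j ∈ C
  · -- The columns in `C` vanish on the rows outside `N`.
    intro i hi hne
    obtain ⟨hiR, hiN⟩ := mem_sdiff.mp (hIR hi)
    have hx : x i j = ⊥ := by
      by_contra h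
      exact hiN (mem_biUnion.mpr ⟨j, hjC, mem_filter.mpr ⟨hiR, h⟩⟩)
    simp [hx] at hne
  · exact hI j (mem_sdiff.mpr ⟨hj, hjC⟩)

end MaxPlus

namespace DR

open Finset

def ofVal : WithBot ℝ → DR
  | ⊥ => bot
  | (r : ℝ) => nb false r

theorem val_ofVal (a : WithBot ℝ) : (ofVal a).val = a := by
  cases a <;> rfl

theorem tangible_ofVal {a : WithBot ℝ} (ha : a ≠ ⊥) : Tangible (ofVal a) := by
  cases a with
  | bot => exact absurd rfl ha
  | coe r => trivial

theorem val_eq_bot_iff {x : DR} : x.val = ⊥ ↔ x = 0 := by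
  cases x with
  | bot => exact iff_of_true rfl rfl
  | nb b r => exact iff_of_false WithBot.coe_ne_bot nofun

theorem val_add (x y : DR) : (x + y).val = x.val ⊔ y.val := by
  cases x with
  | bot => show (DR.add bot y).val = _; simp [bot_add, val]
  | nb b r =>
    cases y with
    | bot => show (DR.add _ bot).val = _; simp [add_bot, val]
    | nb c s =>
      show (DR.add _ _).val = _
      simp only [DR.add]
      split_ifs <;> simp [val] <;> linarith

theorem val_mul (x y : DR) : (x * y).val = x.val + y.val := by
  cases x <;> cases y <;> rfl

theorem val_sum {ι : Type*} (s : Finset ι) (f : ι → DR) :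
    (∑ i ∈ s, f i).val = s.sup fun i => (f i).val := by
  classical
  induction s using Finset.cons_induction with
  | empty => rfl
  | cons i s hi ih => rw [Finset.sum_cons, Finset.sup_cons, val_add, ih]

theorem isGhost_zero : IsGhost 0 := trivial

theorem isGhost_add {x y : DR} (hx : IsGhost x) (hy : IsGhost y) : IsGhost (x + y) := by
  cases x with
  | bot => show IsGhost (DR.add bot y); rwa [bot_add]
  | nb b r =>
    cases y with
    | bot => show IsGhost (DR.add _ bot); rwa [add_bot]
    | nb c s =>
      cases hx; cases hy
      show IsGhost (DR.add _ _)
      simp only [DR.add]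
      split_ifs <;> trivial

theorem isGhost_mul_left (x : DR) {y : DR} (hy : IsGhost y) : IsGhost (x * y) := by
  cases x with
  | bot => trivial
  | nb b r =>
    cases y with
    | bot => trivial
    | nb c s => exact (Bool.or_eq_true b c).mpr (Or.inr hy)

theorem isGhost_mul_right {x : DR} (hx : IsGhost x) (y : DR) : IsGhost (x * y) :=
  mul_comm y x ▸ isGhost_mul_left y hx

theorem isGhost_sum {ι : Type*} {s : Finset ι} {f : ι → DR} (h : ∀ i ∈ s, IsGhost (f i)) :
    IsGhost (∑ i ∈ s, f i) :=
  Finset.sum_induction f IsGhost (fun _ _ => isGhost_add) isGhost_zero h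

theorem isGhost_add_of_val_eq {x y : DR} (h : x.val = y.val) : IsGhost (x + y) := by
  cases x <;> cases y <;> simp only [val, WithBot.coe_inj, WithBot.coe_ne_bot,
    WithBot.bot_ne_coe] at h
  · trivial
  · subst h
    show IsGhost (DR.add _ _)
    simp [DR.add, IsGhost]

theorem isGhost_sum_of_maxAttainedTwice {ι : Type*} {I : Finset ι} {f : ι → DR}
    (h : MaxAttainedTwice I fun i => (f i).val) : IsGhost (∑ i ∈ I, f i) := by
  classical
  rcases I.eq_empty_or_nonempty with rfl | hI
  · exact isGhost_zero
  obtain ⟨i₁, hi₁, hmax⟩ := exists_mem_eq_sup I hI fun i => (f i).val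
  by_cases hbot : (f i₁).val = ⊥
  · rw [sum_eq_zero fun i hi => val_eq_bot_iff.mp
      (le_bot_iff.mp (hbot ▸ hmax ▸ le_sup (f := fun i => (f i).val) hi))]
    exact isGhost_zero
  obtain ⟨i₂, hi₂, hne, hle⟩ := h i₁ hi₁ hbot
  rw [← add_sum_erase I f hi₁]
  refine isGhost_add_of_val_eq (le_antisymm ?_ ?_)
  · rw [val_sum]
    exact hle.trans (le_sup (f := fun i => (f i).val) (mem_erase.mpr ⟨hne, hi₂⟩))
  · rw [val_sum, ← hmax]
    exact sup_mono (erase_subset _ _)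

theorem exists_tangible_ghost_combination {ι κ : Type*} [Fintype ι] [Fintype κ]
    (v : ι → κ → DR) (h : Fintype.card κ < Fintype.card ι) :
    ∃ I : Finset ι, I.Nonempty ∧ ∃ β : ι → DR, (∀ i ∈ I, Tangible (β i)) ∧
      ∀ k, IsGhost (∑ i ∈ I, β i * v i k) := by
  obtain ⟨I, -, hI, a, ha, hmax⟩ := exists_maxAttainedTwice (fun i k => (v i k).val) univ univ h
  refine ⟨I, hI, fun i => ofVal (a i), fun i hi => tangible_ofVal (ha i hi), fun k => ?_⟩
  apply isGhost_sum_of_maxAttainedTwice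
  simpa only [val_mul, val_ofVal] using hmax k (mem_univ k)

end DR

open Finset

theorem SpannedBy.exists_eq_sum_add {n : ℕ} {S : Finset (Fin n → DR)} {v : Fin n → DR}
    (h : SpannedBy S v) :
    ∃ c : S → DR, ∃ u : Fin n → DR, GhostVec u ∧ ∀ j, v j = ∑ w : S, c w * w.1 j + u j := by
  classical
  obtain ⟨I, hIS, -, α, -, u, hu, rfl⟩ := h
  refine ⟨fun w => if w.1 ∈ I then α w else 0, u, hu, fun j => ?_⟩
  rw [sum_coe_sort S fun w => (if w ∈ I then α w else 0) * w j]
  simp only [ite_mul, zero_mul, sum_ite_mem, inter_eq_right.mpr hIS]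
  rfl

theorem setTropDep_of_spannedBy {n : ℕ} {S T : Set (Fin n → DR)} (hS : S.Finite)
    (hT : T.Finite) (hspan : ∀ t ∈ T, SpannedBy S t) (hcard : S.ncard < T.ncard) :
    SetTropDep T := by
  classical
  lift S to Finset (Fin n → DR) using hS
  lift T to Finset (Fin n → DR) using hT
  rw [Set.ncard_coe_finset, Set.ncard_coe_finset] at hcard
  choose c u hu hc using fun t : T => (hspan t (mem_coe.mpr t.2)).exists_eq_sum_add
  obtain ⟨J, hJ, β, hβ, hghost⟩ := exists_tangible_ghost_combination c (by simpa using hcard)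
  let α : (Fin n → DR) → DR := fun w => if h : w ∈ T then β ⟨w, h⟩ else 0
  have hα : ∀ t : T, α t = β t := fun t => dif_pos t.2
  refine ⟨J.map (Function.Embedding.subtype _), fun w hw => ?_, hJ.map, α, fun w hw => ?_,
    fun j => ?_⟩
  · obtain ⟨t, -, rfl⟩ := mem_map.mp hw
    exact t.2
  · obtain ⟨t, ht, rfl⟩ := mem_map.mp hw
    exact (hα t).symm ▸ hβ t ht
  have hexpand : ∑ t ∈ J, β t * t.1 j =
      ∑ w : S, (∑ t ∈ J, β t * c t w) * w.1 j + ∑ t ∈ J, β t * u t j := by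
    simp_rw [hc _ j, mul_add, sum_add_distrib, mul_sum, sum_mul, mul_assoc]
    rw [sum_comm]
  rw [sum_map]
  simp only [Function.Embedding.coe_subtype, hα, hexpand]
  exact isGhost_add (isGhost_sum fun w _ => isGhost_mul_right (hghost w) _)
    (isGhost_sum fun t _ => isGhost_mul_left _ (hu t j))

theorem spanning_set_card_ge_rank_general (n : ℕ) (V : Submodule DR (Fin n → DR))
    (S : Set (Fin n → DR)) (hfin : S.Finite)
    (hspan : ∀ v ∈ V, SpannedBy S v) :
    trank (V : Set (Fin n → DR)) ≤ S.ncard := by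
  refine csSup_le' ?_
  rintro _ ⟨T, ⟨hTV, hTindep, -⟩, hTfin, rfl⟩
  by_contra! hlt
  exact hTindep (setTropDep_of_spannedBy hfin hTfin (fun t ht => hspan t (hTV ht)) hlt)

/-- A finite tropically spanning set of a subspace `V` of `D(ℝ)^(n)` has at least
`rank V` elements. -/
theorem spanning_set_card_ge_rank (n : ℕ) (V : Submodule DR (Fin n → DR))
    (S : Set (Fin n → DR)) (hS : S ⊆ V) (hfin : S.Finite)
    (hspan : ∀ v ∈ V, SpannedBy S v) :
    trank (V : Set (Fin n → DR)) ≤ S.ncard :=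
  spanning_set_card_ge_rank_general n V S hfin hspan
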